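/- arXiv:2211.06683 — 6 statements merged into one kernel-verified Lean document; each statement's English description precedes it below -/
import Mathlib

section
/- Let a_j := i·e_j ∈ ℂ^{n+1} for j = 1,…,N with N ≤ n+1 (e_j the j-th standard basis vector), and let S_j := {z ∈ ℂ^{n+1} | (z − a_j)² = 1}. Then for any nonempty I ⊆ {1,…,N}, the intersection ⋂_{i∈I} S_i is homeomorphic to the complex (n−|I|+1)-sphere S_C^{n−|I|+1}. Concretely, with j₀ ∈ I fixed, ⋂_{i∈I} S_i = {z | z ∈ S_{j₀} and z_j = z_{j₀} for all j ∈ I∖{j₀}} after eliminating variables, and projection to the coordinates outside I∖{j₀} gives the homeomorphism. -/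
/-!
Subtracting the equations `(z - i e_p)² = 1` of two of the spheres gives `z_p = z_q`, so on the
intersection the coordinates indexed by `I` share one value `t`. The remaining equation reads
`∑_{x ∉ I} z_x² + k t² - 2 i t = 2` with `k = |I|`; completing the square in `s t`, where
`s² = k`, turns it into a complex sphere of squared radius `2 - 1/k ≠ 0` in the `n + 2 - k`
variables `(z_x)_{x ∉ I}, s t`, and a complex sphere of nonzero radius is an affine image of the
unit one.
-/

open Finset

variable {ι : Type*}

noncomputable def unitComplexSphereCongr {κ : Type*} [Fintype ι] [Fintype κ] (e : ι ≃ κ) :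
    {w : ι → ℂ // ∑ j, w j ^ 2 = 1} ≃ₜ {w : κ → ℂ // ∑ j, w j ^ 2 = 1} :=
  (Homeomorph.piCongrLeft (Y := fun _ => ℂ) e).subtype fun w => by
    rw [← e.sum_comp]
    simp [Homeomorph.piCongrLeft_apply]

noncomputable def complexSphereHomeomorphUnitSphere [Fintype ι] (a : ι → ℂ) {ρ : ℂ}
    (hρ : ρ ≠ 0) :
    {z : ι → ℂ // ∑ j, (z j - a j) ^ 2 = ρ} ≃ₜ {w : ι → ℂ // ∑ j, w j ^ 2 = 1} :=
  have hr : (ρ ^ (2⁻¹ : ℂ)) ^ 2 = ρ := Complex.cpow_ofNat_inv_pow ρ 2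
  ((Homeomorph.subRight a).trans (Homeomorph.smulOfNeZero (ρ ^ (2⁻¹ : ℂ))⁻¹
    (inv_ne_zero fun h0 => hρ (by rw [← hr, h0, zero_pow two_ne_zero])))).subtype fun z => by
    simp only [Homeomorph.trans_apply, Homeomorph.coe_subRight, Homeomorph.smulOfNeZero_apply,
      Pi.smul_apply, Pi.sub_apply, smul_eq_mul, mul_pow, ← Finset.mul_sum, inv_pow, hr]
    rw [inv_mul_eq_one₀ hρ, eq_comm]

theorem sum_sub_single_sq {R : Type*} [CommRing R] [Fintype ι] [DecidableEq ι] (z : ι → R)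
    (p : ι) (c : R) :
    ∑ j, (z j - (Pi.single p c : ι → R) j) ^ 2 = ∑ j, z j ^ 2 - 2 * c * z p + c ^ 2 := by
  simp only [sub_sq, Finset.sum_add_distrib, Finset.sum_sub_distrib]
  simp [Pi.single_apply, ite_pow, mul_comm, mul_left_comm]

theorem iInter_setOf_sum_sub_single_sq [Fintype ι] [DecidableEq ι] {α : Type*} (f : α → ι)
    {c : ℂ} (hc : c ≠ 0) (ρ : ℂ) {I : Finset α} {i₀ : α} (hi₀ : i₀ ∈ I) :
    ⋂ i ∈ I, {z : ι → ℂ | ∑ j, (z j - (Pi.single (f i) c : ι → ℂ) j) ^ 2 = ρ} =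
      {z | ∑ j, (z j - (Pi.single (f i₀) c : ι → ℂ) j) ^ 2 = ρ ∧ ∀ i ∈ I, z (f i) = z (f i₀)} := by
  ext z
  simp only [Set.mem_iInter, Set.mem_ofPred_eq, sum_sub_single_sq]
  refine ⟨fun h => ⟨h i₀ hi₀, fun i hi => ?_⟩, fun ⟨h₀, h⟩ i hi => by rw [h i hi]; exact h₀⟩
  exact mul_left_cancel₀ (mul_ne_zero two_ne_zero hc) (by linear_combination h i₀ hi₀ - h i hi)

section Fold

variable [DecidableEq ι] (P : Finset ι) (p₀ : ι) (s : ℂ)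

/-- Merges the coordinates in `P` of a vector constant on `P` into one; with `s² = #P` this
preserves `∑ z_j²` (`sum_sq_foldConst`). -/
def foldConst (z : ι → ℂ) : Option {x // x ∉ P} → ℂ
  | none => s * z p₀
  | some x => z x

noncomputable def unfoldConst (w : Option {x // x ∉ P} → ℂ) : ι → ℂ :=
  fun x => if h : x ∈ P then w none / s else w (some ⟨x, h⟩)

variable {P p₀ s}

omit [DecidableEq ι] in
theorem continuous_foldConst : Continuous (foldConst P p₀ s) :=
  continuous_pi fun o => by cases o <;> simp only [foldConst] <;> fun_prop

theorem continuous_unfoldConst : Continuous (unfoldConst P s) :=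
  continuous_pi fun x => by
    by_cases h : x ∈ P <;> simp only [unfoldConst, h, dite_true, dite_false] <;> fun_prop

theorem foldConst_unfoldConst (hp₀ : p₀ ∈ P) (hs : s ≠ 0) (w : Option {x // x ∉ P} → ℂ) :
    foldConst P p₀ s (unfoldConst P s w) = w := by
  funext o
  cases o with
  | none => simp [foldConst, unfoldConst, hp₀, mul_div_cancel₀ _ hs]
  | some x => simp [foldConst, unfoldConst, x.2]

theorem unfoldConst_foldConst (hs : s ≠ 0) {z : ι → ℂ} (hz : ∀ p ∈ P, z p = z p₀) :
    unfoldConst P s (foldConst P p₀ s z) = z := by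
  funext x
  by_cases h : x ∈ P
  · simp [foldConst, unfoldConst, h, hz x h, mul_div_cancel_left₀ _ hs]
  · simp [foldConst, unfoldConst, h]

theorem unfoldConst_apply_eq (hp₀ : p₀ ∈ P) (w : Option {x // x ∉ P} → ℂ) :
    ∀ p ∈ P, unfoldConst P s w p = unfoldConst P s w p₀ := fun p hp => by
  simp [unfoldConst, hp, hp₀]

theorem sum_sq_foldConst [Fintype ι] (hs : s ^ 2 = #P) {z : ι → ℂ} (hz : ∀ p ∈ P, z p = z p₀) :
    ∑ o, foldConst P p₀ s z o ^ 2 = ∑ j, z j ^ 2 := by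
  have hP : ∑ p ∈ P, z p ^ 2 = s ^ 2 * z p₀ ^ 2 := by
    rw [Finset.sum_congr rfl fun p hp => by rw [hz p hp], Finset.sum_const, nsmul_eq_mul, hs]
  rw [← Finset.sum_add_sum_compl P, hP,
    Finset.sum_subtype (F := inferInstance) Pᶜ (fun _ => Finset.mem_compl), Fintype.sum_option]
  simp only [foldConst, mul_pow]

omit [DecidableEq ι] in
theorem ne_zero_of_sq_eq_card (hp₀ : p₀ ∈ P) (hs : s ^ 2 = #P) : s ≠ 0 :=
  ne_zero_pow two_ne_zero (hs ▸ Nat.cast_ne_zero.2 (card_ne_zero_of_mem hp₀))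

theorem sum_sub_single_sq_foldConst [Fintype ι] (hp₀ : p₀ ∈ P) (hs : s ^ 2 = #P) (c : ℂ)
    {z : ι → ℂ} (hz : ∀ p ∈ P, z p = z p₀) :
    ∑ o, (foldConst P p₀ s z o - (Pi.single none (c / s) : Option {x // x ∉ P} → ℂ) o) ^ 2 =
      ∑ j, (z j - (Pi.single p₀ c : ι → ℂ) j) ^ 2 - c ^ 2 + c ^ 2 / #P := by
  have hs₀ := ne_zero_of_sq_eq_card hp₀ hs
  rw [sum_sub_single_sq, sum_sub_single_sq, sum_sq_foldConst hs hz, ← hs]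
  simp only [foldConst]
  field_simp
  ring

noncomputable def foldConstHomeomorph [Fintype ι] (hp₀ : p₀ ∈ P) (hs : s ^ 2 = #P) (c ρ : ℂ) :
    {z : ι → ℂ // ∑ j, (z j - (Pi.single p₀ c : ι → ℂ) j) ^ 2 = ρ ∧ ∀ p ∈ P, z p = z p₀} ≃ₜ
      {w : Option {x // x ∉ P} → ℂ //
        ∑ o, (w o - (Pi.single none (c / s) : Option {x // x ∉ P} → ℂ) o) ^ 2 =
          ρ - c ^ 2 + c ^ 2 / #P} where
  toFun z := ⟨foldConst P p₀ s z, by rw [sum_sub_single_sq_foldConst hp₀ hs c z.2.2, z.2.1]⟩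
  invFun w := ⟨unfoldConst P s w, by
    have h := sum_sub_single_sq_foldConst hp₀ hs c (unfoldConst_apply_eq (s := s) hp₀ w)
    rw [foldConst_unfoldConst hp₀ (ne_zero_of_sq_eq_card hp₀ hs)] at h
    linear_combination w.2 - h, unfoldConst_apply_eq (s := s) hp₀ w⟩
  left_inv z := Subtype.ext (unfoldConst_foldConst (ne_zero_of_sq_eq_card hp₀ hs) z.2.2)
  right_inv w := Subtype.ext (foldConst_unfoldConst hp₀ (ne_zero_of_sq_eq_card hp₀ hs) w)
  continuous_toFun := by exact (continuous_foldConst.comp continuous_subtype_val).subtype_mk _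
  continuous_invFun := (continuous_unfoldConst.comp continuous_subtype_val).subtype_mk _

end Fold

theorem Fintype.card_option_subtype_notMem [Fintype ι] [DecidableEq ι] (P : Finset ι) :
    Fintype.card (Option {x // x ∉ P}) = Fintype.card ι + 1 - #P := by
  rw [Fintype.card_option, Fintype.card_subtype_compl, Fintype.card_coe]
  have := P.card_le_univ
  omega

theorem two_sub_inv_natCast_ne_zero (k : ℕ) : (2 - (k : ℂ)⁻¹) ≠ 0 := by
  rcases eq_or_ne k 0 with rfl | hk
  · norm_num
  intro h
  have h2 : (2 * k : ℂ) = 1 := by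
    field_simp at h
    linear_combination h
  norm_cast at h2
  omega

theorem Fin.pi_single_castLE_apply {R : Type*} [Zero R] {n N : ℕ} (h : N ≤ n) (i : Fin N)
    (c : R) (j : Fin n) :
    (Pi.single (Fin.castLE h i) c : Fin n → R) j = if (j : ℕ) = (i : ℕ) then c else 0 := by
  simp [Pi.single_apply, Fin.ext_iff]

theorem stmt_3_general (n N : ℕ) (hN : N ≤ n + 1)
    (I : Finset (Fin N)) (j₀ : Fin N) (hj₀ : j₀ ∈ I) :
    let a : Fin N → Fin (n + 1) → ℂ := fun i j => if (j : ℕ) = (i : ℕ) then Complex.I else 0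
    let S : Fin N → Set (Fin (n + 1) → ℂ) := fun i => {z | ∑ j, (z j - a i j) ^ 2 = 1}
    (⋂ i ∈ I, S i) =
        {z | z ∈ S j₀ ∧ ∀ j ∈ I, z (Fin.castLE hN j) = z (Fin.castLE hN j₀)} ∧
      Nonempty ((⋂ i ∈ I, S i) ≃ₜ {w : Fin (n + 2 - I.card) → ℂ // ∑ j, w j ^ 2 = 1}) := by
  intro a S
  have hS : S = fun i =>
      {z | ∑ j, (z j - (Pi.single (Fin.castLE hN i) Complex.I : _ → ℂ) j) ^ 2 = 1} := by
    simp only [S, a, Fin.pi_single_castLE_apply]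
  have hset : ⋂ i ∈ I, S i =
      {z | z ∈ S j₀ ∧ ∀ j ∈ I, z (Fin.castLE hN j) = z (Fin.castLE hN j₀)} := by
    rw [hS]; exact iInter_setOf_sum_sub_single_sq _ Complex.I_ne_zero 1 hj₀
  refine ⟨hset, ⟨?_⟩⟩
  set P := I.map (Fin.castLEEmb hN)
  have hP : {z | z ∈ S j₀ ∧ ∀ j ∈ I, z (Fin.castLE hN j) = z (Fin.castLE hN j₀)} =
      {z | ∑ j, (z j - (Pi.single (Fin.castLE hN j₀) Complex.I : _ → ℂ) j) ^ 2 = 1 ∧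
        ∀ p ∈ P, z p = z (Fin.castLE hN j₀)} := by
    simp [hS, P]
  have hp₀ : Fin.castLE hN j₀ ∈ P := Finset.mem_map_of_mem _ hj₀
  have hs : ((#P : ℂ) ^ (2⁻¹ : ℂ)) ^ 2 = #P := Complex.cpow_ofNat_inv_pow _ 2
  have hρ : (1 - Complex.I ^ 2 + Complex.I ^ 2 / #P : ℂ) ≠ 0 := by
    convert two_sub_inv_natCast_ne_zero #P using 1
    rw [Complex.I_sq]; ring
  have hcard : Fintype.card (Option {x // x ∉ P}) = n + 2 - #I := by
    rw [Fintype.card_option_subtype_notMem, Fintype.card_fin, card_map]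
  exact (Homeomorph.setCongr (hset.trans hP)).trans <|
    (foldConstHomeomorph hp₀ hs Complex.I 1).trans <|
    (complexSphereHomeomorphUnitSphere _ hρ).trans
      (unitComplexSphereCongr (Fintype.equivFinOfCardEq hcard))

/-- Let `a_j := i·e_j ∈ ℂ^{n+1}` for `j = 1,…,N` with `N ≤ n+1`, and
`S_j := {z | (z − a_j)² = 1}`.  For any nonempty `I ⊆ {1,…,N}` and any fixed `j₀ ∈ I`,
the intersection `⋂_{i∈I} S_i` equals `{z ∈ S_{j₀} | z_j = z_{j₀} for all j ∈ I}`
(elimination of variables) and is homeomorphic to the complex unit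
`(n−|I|+1)`-sphere `S_C^{n−|I|+1} ⊂ ℂ^{n−|I|+2}`. -/
theorem stmt_3 (n N : ℕ) (hN : N ≤ n + 1)
    (I : Finset (Fin N)) (hI : I.Nonempty) (j₀ : Fin N) (hj₀ : j₀ ∈ I) :
    let a : Fin N → Fin (n + 1) → ℂ := fun i j => if (j : ℕ) = (i : ℕ) then Complex.I else 0
    let S : Fin N → Set (Fin (n + 1) → ℂ) := fun i => {z | ∑ j, (z j - a i j) ^ 2 = 1}
    (⋂ i ∈ I, S i) =
        {z | z ∈ S j₀ ∧ ∀ j ∈ I, z (Fin.castLE hN j) = z (Fin.castLE hN j₀)} ∧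
      Nonempty ((⋂ i ∈ I, S i) ≃ₜ {w : Fin (n + 2 - I.card) → ℂ // ∑ j, w j ^ 2 = 1}) :=
  stmt_3_general n N hN I j₀ hj₀
end

section
/- With notation as in the disk–simplex homeomorphism: the map h restricts to a homeomorphism from S^{n−1} ∩ X onto ι(Δ^{n−1}), where ι : Δ^{n−1} → Δ^n, ι(x) = (x, 1 − ∑_{j=1}^{n−1} x_j) is the inclusion of the last face of Δ^n. In particular, for x ∈ S^{n−1} ∩ X one has ‖h(x)‖₁ = 1. -/
/-!
Since the orthant `X` is a cone, the radial projection `x ↦ x / ‖x‖₁` is a homeomorphism from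
the `ℓ²`-sphere `S ∩ X` onto the `ℓ¹`-sphere of `X`, with inverse `y ↦ y / ‖y‖₂`. Flipping the
signs of the coordinates by `τ` carries the `ℓ¹`-sphere of `X` onto the standard simplex
`{y ≥ 0 | ∑ y = 1}`, and the last-face inclusion `ι` identifies `Δ^n` with this simplex by
forgetting the last coordinate. On `S` the composite is `h`.
-/

/-- The `ℓ¹` norm on `ℝ^n`. -/
def norm1 {n : ℕ} (x : Fin n → ℝ) : ℝ := ∑ i, |x i|

/-- The `ℓ²` norm on `ℝ^n`. -/
noncomputable def norm2 {n : ℕ} (x : Fin n → ℝ) : ℝ := Real.sqrt (∑ i, x i ^ 2)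

open Finset

variable {n : ℕ}

section Norms

lemma norm1_smul (c : ℝ) (x : Fin n → ℝ) : norm1 (c • x) = |c| * norm1 x := by
  simp only [norm1, Pi.smul_apply, smul_eq_mul, abs_mul, mul_sum]

lemma norm2_smul (c : ℝ) (x : Fin n → ℝ) : norm2 (c • x) = |c| * norm2 x := by
  simp only [norm2, Pi.smul_apply, smul_eq_mul, mul_pow, ← mul_sum]
  rw [Real.sqrt_mul (sq_nonneg c), Real.sqrt_sq_eq_abs]

lemma norm1_pos {x : Fin n → ℝ} (hx : x ≠ 0) : 0 < norm1 x := by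
  obtain ⟨i, hi⟩ := Function.ne_iff.mp hx
  exact (abs_pos.mpr hi).trans_le
    (single_le_sum (f := fun i => |x i|) (fun i _ => abs_nonneg _) (mem_univ i))

lemma norm2_pos {x : Fin n → ℝ} (hx : x ≠ 0) : 0 < norm2 x := by
  obtain ⟨i, hi⟩ := Function.ne_iff.mp hx
  exact Real.sqrt_pos.mpr <| (pow_two_pos_of_ne_zero hi).trans_le
    (single_le_sum (f := fun j => x j ^ 2) (fun j _ => sq_nonneg _) (mem_univ i))

lemma ne_zero_of_norm1_eq_one {x : Fin n → ℝ} (hx : norm1 x = 1) : x ≠ 0 := by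
  rintro rfl
  simp [norm1] at hx

lemma ne_zero_of_norm2_eq_one {x : Fin n → ℝ} (hx : norm2 x = 1) : x ≠ 0 := by
  rintro rfl
  simp [norm2] at hx

lemma continuous_norm1 : Continuous (norm1 (n := n)) := by
  unfold norm1; fun_prop

lemma continuous_norm2 : Continuous (norm2 (n := n)) := by
  unfold norm2; fun_prop

lemma norm1_inv_smul_self {x : Fin n → ℝ} (hx : x ≠ 0) : norm1 ((norm1 x)⁻¹ • x) = 1 := by
  rw [norm1_smul, abs_inv, abs_of_pos (norm1_pos hx), inv_mul_cancel₀ (norm1_pos hx).ne']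

lemma norm2_inv_smul_self {x : Fin n → ℝ} (hx : x ≠ 0) : norm2 ((norm2 x)⁻¹ • x) = 1 := by
  rw [norm2_smul, abs_inv, abs_of_pos (norm2_pos hx), inv_mul_cancel₀ (norm2_pos hx).ne']

lemma inv_norm1_smul_of_pos {c : ℝ} (hc : 0 < c) (x : Fin n → ℝ) :
    (norm1 (c • x))⁻¹ • c • x = (norm1 x)⁻¹ • x := by
  rw [norm1_smul, abs_of_pos hc, smul_smul, mul_inv_rev, mul_assoc, inv_mul_cancel₀ hc.ne', mul_one]

lemma inv_norm2_smul_of_pos {c : ℝ} (hc : 0 < c) (x : Fin n → ℝ) :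
    (norm2 (c • x))⁻¹ • c • x = (norm2 x)⁻¹ • x := by
  rw [norm2_smul, abs_of_pos hc, smul_smul, mul_inv_rev, mul_assoc, inv_mul_cancel₀ hc.ne', mul_one]

lemma norm1_eq_sum_of_nonneg {x : Fin n → ℝ} (hx : ∀ i, 0 ≤ x i) : norm1 x = ∑ i, x i :=
  sum_congr rfl fun i _ => abs_of_nonneg (hx i)

lemma norm1_eq_one_of_mem_stdSimplex {x : Fin n → ℝ} (hx : x ∈ stdSimplex ℝ (Fin n)) :
    norm1 x = 1 :=
  (norm1_eq_sum_of_nonneg hx.1).trans hx.2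

end Norms

section RadialProjection

variable {C : Set (Fin n → ℝ)}

lemma inv_norm1_smul_mem (hC : ∀ c : ℝ, 0 < c → ∀ x ∈ C, c • x ∈ C)
    {x : Fin n → ℝ} (hx : x ∈ {x | norm2 x = 1} ∩ C) :
    (norm1 x)⁻¹ • x ∈ {x | norm1 x = 1} ∩ C :=
  have hx₀ := ne_zero_of_norm2_eq_one hx.1
  ⟨norm1_inv_smul_self hx₀, hC _ (inv_pos.mpr (norm1_pos hx₀)) _ hx.2⟩

lemma inv_norm2_smul_mem (hC : ∀ c : ℝ, 0 < c → ∀ x ∈ C, c • x ∈ C)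
    {y : Fin n → ℝ} (hy : y ∈ {x | norm1 x = 1} ∩ C) :
    (norm2 y)⁻¹ • y ∈ {x | norm2 x = 1} ∩ C :=
  have hy₀ := ne_zero_of_norm1_eq_one hy.1
  ⟨norm2_inv_smul_self hy₀, hC _ (inv_pos.mpr (norm2_pos hy₀)) _ hy.2⟩

noncomputable def radialProjection (hC : ∀ c : ℝ, 0 < c → ∀ x ∈ C, c • x ∈ C) :
    ({x | norm2 x = 1} ∩ C : Set (Fin n → ℝ)) ≃ₜ ({x | norm1 x = 1} ∩ C : Set (Fin n → ℝ)) where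
  toFun x := ⟨(norm1 (x : Fin n → ℝ))⁻¹ • (x : Fin n → ℝ), inv_norm1_smul_mem hC x.2⟩
  invFun y := ⟨(norm2 (y : Fin n → ℝ))⁻¹ • (y : Fin n → ℝ), inv_norm2_smul_mem hC y.2⟩
  left_inv x := Subtype.ext <| by
    have hx : (x : Fin n → ℝ) ≠ 0 := ne_zero_of_norm2_eq_one x.2.1
    dsimp only
    rw [inv_norm2_smul_of_pos (inv_pos.mpr (norm1_pos hx)), x.2.1, inv_one, one_smul]
  right_inv y := Subtype.ext <| by
    have hy : (y : Fin n → ℝ) ≠ 0 := ne_zero_of_norm1_eq_one y.2.1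
    dsimp only
    rw [inv_norm1_smul_of_pos (inv_pos.mpr (norm2_pos hy)), y.2.1, inv_one, one_smul]
  continuous_toFun :=
    (((continuous_norm1.comp continuous_subtype_val).inv₀ fun x =>
      (norm1_pos (ne_zero_of_norm2_eq_one x.2.1)).ne').smul continuous_subtype_val).subtype_mk _
  continuous_invFun :=
    (((continuous_norm2.comp continuous_subtype_val).inv₀ fun y =>
      (norm2_pos (ne_zero_of_norm1_eq_one y.2.1)).ne').smul continuous_subtype_val).subtype_mk _

end RadialProjection

section SignFlip

variable {τ : Fin n → ℝ}

def signFlip (hτ : ∀ i, |τ i| = 1) : (Fin n → ℝ) ≃ₜ (Fin n → ℝ) :=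
  have hττ : τ * τ = 1 := funext fun i => by
    rw [Pi.mul_apply, ← abs_mul_abs_self, hτ, mul_one, Pi.one_apply]
  { toFun x := τ * x
    invFun x := τ * x
    left_inv x := by simp only [← mul_assoc, hττ, one_mul]
    right_inv x := by simp only [← mul_assoc, hττ, one_mul]
    continuous_toFun := continuous_const.mul continuous_id
    continuous_invFun := continuous_const.mul continuous_id }

lemma norm1_eq_sum_mul_of_nonneg (hτ : ∀ i, |τ i| = 1) {x : Fin n → ℝ}
    (hx : ∀ i, 0 ≤ τ i * x i) : norm1 x = ∑ i, τ i * x i :=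
  sum_congr rfl fun i _ => by rw [← one_mul |x i|, ← hτ i, ← abs_mul, abs_of_nonneg (hx i)]

lemma mul_mem_stdSimplex_iff (hτ : ∀ i, |τ i| = 1) (x : Fin n → ℝ) :
    τ * x ∈ stdSimplex ℝ (Fin n) ↔ x ∈ {x | norm1 x = 1} ∩ {x | ∀ i, 0 ≤ τ i * x i} := by
  constructor
  · rintro ⟨h0, h1⟩
    exact ⟨(norm1_eq_sum_mul_of_nonneg hτ h0).trans h1, h0⟩
  · rintro ⟨h1, h0⟩
    exact ⟨h0, (norm1_eq_sum_mul_of_nonneg hτ h0).symm.trans h1⟩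

def orthantSphereHomeomorphStdSimplex (hτ : ∀ i, |τ i| = 1) :
    ({x | norm1 x = 1} ∩ {x | ∀ i, 0 ≤ τ i * x i} : Set (Fin n → ℝ)) ≃ₜ stdSimplex ℝ (Fin n) :=
  (signFlip hτ).subtype fun x => (mul_mem_stdSimplex_iff hτ x).symm

end SignFlip

lemma image_snoc_eq_stdSimplex :
    (fun x : Fin n → ℝ => (Fin.snoc x (1 - ∑ j, x j) : Fin (n + 1) → ℝ)) ''
      {x | (∀ i, 0 ≤ x i) ∧ norm1 x ≤ 1} = stdSimplex ℝ (Fin (n + 1)) := by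
  ext y
  constructor
  · rintro ⟨x, ⟨hx0, hx1⟩, rfl⟩
    rw [norm1_eq_sum_of_nonneg hx0] at hx1
    refine ⟨fun i => ?_, by simp [Fin.sum_univ_castSucc]⟩
    cases i using Fin.lastCases with
    | last => simpa using hx1
    | cast i => simpa using hx0 i
  · rintro ⟨hy0, hy1⟩
    have hinit : ∑ i, Fin.init y i = 1 - y (Fin.last n) := by
      rw [Fin.sum_univ_castSucc] at hy1
      exact eq_sub_of_add_eq hy1
    refine ⟨Fin.init y, ⟨fun i => hy0 _, ?_⟩, ?_⟩
    · rw [norm1_eq_sum_of_nonneg (x := Fin.init y) fun i => hy0 _, hinit]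
      linarith [hy0 (Fin.last n)]
    · simp only [hinit, sub_sub_cancel, Fin.snoc_init_self]

/-- With notation as in the disk–simplex homeomorphism (ambient dimension
`n+1`): the map `h(x) = (‖x‖₂/‖x‖₁)·(τ₁x₁,…)` restricts to a homeomorphism from
`S^n ∩ X` onto `ι(Δ^n)`, where `ι : Δ^n → Δ^{n+1}`, `ι(x) = (x, 1 − ∑_j x_j)` is the
inclusion of the last face.  In particular `‖h(x)‖₁ = 1` for `x ∈ S^n ∩ X`. -/
theorem stmt_8 (n : ℕ) (τ : Fin (n + 1) → ℝ) (hτ : ∀ i, τ i = 1 ∨ τ i = -1) :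
    let X : Set (Fin (n + 1) → ℝ) := {x | ∀ i, 0 ≤ τ i * x i}
    let S : Set (Fin (n + 1) → ℝ) := {x | norm2 x = 1}
    let Δ' : Set (Fin n → ℝ) := {x | (∀ i, 0 ≤ x i) ∧ norm1 x ≤ 1}
    let ι : (Fin n → ℝ) → (Fin (n + 1) → ℝ) := fun x => Fin.snoc x (1 - ∑ j, x j)
    let h : (Fin (n + 1) → ℝ) → (Fin (n + 1) → ℝ) := fun x =>
      if x = 0 then 0 else fun i => norm2 x / norm1 x * (τ i * x i)
    (∀ x ∈ S ∩ X, norm1 (h x) = 1) ∧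
    ∃ e : (S ∩ X : Set (Fin (n + 1) → ℝ)) ≃ₜ (ι '' Δ' : Set (Fin (n + 1) → ℝ)),
      ∀ x : (S ∩ X : Set (Fin (n + 1) → ℝ)), (e x : Fin (n + 1) → ℝ) = h x := by
  intro X S Δ' ι h
  have hτ' : ∀ i, |τ i| = 1 := fun i => (abs_eq zero_le_one).mpr (hτ i)
  have hX : ∀ c : ℝ, 0 < c → ∀ x ∈ X, c • x ∈ X := fun c hc x hx i => by
    simpa only [Pi.smul_apply, smul_eq_mul, mul_left_comm] using mul_nonneg hc.le (hx i)
  let e : (S ∩ X : Set (Fin (n + 1) → ℝ)) ≃ₜ (ι '' Δ' : Set (Fin (n + 1) → ℝ)) :=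
    ((radialProjection hX).trans (orthantSphereHomeomorphStdSimplex hτ')).trans
      (Homeomorph.setCongr image_snoc_eq_stdSimplex.symm)
  have he : ∀ x, (e x : Fin (n + 1) → ℝ) = h x := by
    rintro ⟨x, hxS, -⟩
    have hx₁ : norm2 x = 1 := hxS
    simp only [h, if_neg (ne_zero_of_norm2_eq_one hx₁), hx₁]
    funext i
    show τ i * ((norm1 x)⁻¹ * x i) = _
    ring
  refine ⟨fun x hx => ?_, e, he⟩
  rw [← he ⟨x, hx⟩]
  exact norm1_eq_one_of_mem_stdSimplex (image_snoc_eq_stdSimplex ▸ (e ⟨x, hx⟩).2)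
end

section
/- Let a_j := i·e_j ∈ ℂ^{n+1} for 1 ≤ j ≤ n+1 and r_j := 1, and S_j := {z ∈ ℂ^{n+1} | (z−a_j)² = 1}. Then the spheres S₁,…,S_{n+1} are in general position: for every nonempty I ⊆ {1,…,n+1} there is no point z ∈ ⋂_{j∈I} S_j at which the gradients {z − a_j}_{j∈I} are linearly dependent over ℂ. -/
/-! If `∑ gᵢ • (z - aᵢ) = 0` is a nontrivial relation, then, the centres `aᵢ` being independent,
`∑ gᵢ ≠ 0` and `z = ∑ cᵢ • aᵢ` is an affine combination of them. Since `aᵢ ⬝ᵥ aₖ = -δᵢₖ`, the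
sphere equations read `2cₖ - 1 - ∑ cᵢ² = 1`, so all `cₖ` equal a common `c` with `|I| c = 1`;
then `∑ cᵢ² = c`, hence `c = 2` and `2|I| = 1`, which is absurd. -/

open Finset

section

variable {K V ι : Type*} [Field K] [AddCommGroup V] [Module K V] [Fintype ι]

theorem LinearIndependent.const_sub {a : ι → V} (ha : LinearIndependent K a) {z : V}
    (hz : ∀ c : ι → K, ∑ i, c i = 1 → ∑ i, c i • a i ≠ z) :
    LinearIndependent K fun i => z - a i := by
  rw [Fintype.linearIndependent_iff]
  intro g hg
  have hrel : (∑ i, g i) • z = ∑ i, g i • a i := by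
    simpa only [smul_sub, sum_sub_distrib, ← sum_smul, sub_eq_zero] using hg
  by_cases hs : ∑ i, g i = 0
  · rw [hs, zero_smul, eq_comm] at hrel
    exact Fintype.linearIndependent_iff.mp ha g hrel
  · refine absurd ?_ (hz (fun i => g i / ∑ i, g i) (by rw [← sum_div, div_self hs]))
    simp only [div_eq_inv_mul, mul_smul, ← smul_sum, ← hrel, inv_smul_smul₀ hs]

end

def NegOrthonormal {R κ ι : Type*} [CommRing R] [Fintype κ] [DecidableEq ι] (a : ι → κ → R) :
    Prop :=
  ∀ i k, a i ⬝ᵥ a k = if i = k then -1 else 0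

namespace NegOrthonormal

variable {R κ ι : Type*} [CommRing R] [Fintype κ] [Fintype ι] [DecidableEq ι] {a : ι → κ → R}

theorem sum_smul_dotProduct (ha : NegOrthonormal a) (d : ι → R) (k : ι) :
    (∑ i, d i • a i) ⬝ᵥ a k = -d k := by
  simp [sum_dotProduct, ha _ _]

theorem dotProduct_sum_smul (ha : NegOrthonormal a) (d : ι → R) (k : ι) :
    a k ⬝ᵥ (∑ i, d i • a i) = -d k := by
  simp [dotProduct_sum, ha _ _]

theorem sum_smul_dotProduct_self (ha : NegOrthonormal a) (d : ι → R) :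
    (∑ i, d i • a i) ⬝ᵥ (∑ i, d i • a i) = -∑ i, d i ^ 2 := by
  simp [dotProduct_sum, ha.sum_smul_dotProduct, sq]

theorem sub_dotProduct_self (ha : NegOrthonormal a) (c : ι → R) (k : ι) :
    (∑ i, c i • a i - a k) ⬝ᵥ (∑ i, c i • a i - a k) = 2 * c k - 1 - ∑ i, c i ^ 2 := by
  rw [sub_dotProduct, dotProduct_sub, dotProduct_sub, ha.sum_smul_dotProduct_self,
    ha.sum_smul_dotProduct, ha.dotProduct_sum_smul, ha k k, if_pos rfl]
  ring

theorem linearIndependent {K : Type*} [Field K] {a : ι → κ → K} (ha : NegOrthonormal a) :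
    LinearIndependent K a := by
  rw [Fintype.linearIndependent_iff]
  intro g hg k
  simpa [hg] using ha.sum_smul_dotProduct g k

theorem not_forall_sub_dotProduct_self_eq_one {K : Type*} [Field K] [CharZero K]
    {a : ι → κ → K} (ha : NegOrthonormal a) (c : ι → K) (hc : ∑ i, c i = 1) :
    ¬ ∀ k, (∑ i, c i • a i - a k) ⬝ᵥ (∑ i, c i • a i - a k) = 1 := by
  intro h
  obtain ⟨c₀, hc₀⟩ : ∃ c₀, ∀ k, c k = c₀ :=
    ⟨(2 + ∑ i, c i ^ 2) / 2, fun k => by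
      linear_combination (h k).symm.trans (ha.sub_dotProduct_self c k) / -2⟩
  obtain ⟨k, -⟩ := nonempty_of_sum_ne_zero (hc ▸ one_ne_zero)
  have hsphere := (h k).symm.trans (ha.sub_dotProduct_self c k)
  simp only [hc₀, sum_const, card_univ, nsmul_eq_mul] at hc hsphere
  have hcard : ((2 * Fintype.card ι : ℕ) : K) = (1 : ℕ) := by
    push_cast
    linear_combination (1 - Fintype.card ι * c₀) * hc + Fintype.card ι * hsphere
  have := Nat.cast_inj.mp hcard
  omega

end NegOrthonormal

theorem negOrthonormal_single {R κ ι : Type*} [CommRing R] [Fintype κ] [DecidableEq κ]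
    [DecidableEq ι] {x : R} (hx : x * x = -1) {e : ι → κ} (he : Function.Injective e) :
    NegOrthonormal fun i => Pi.single (e i) x := by
  intro i k
  simp [Pi.single_apply, he.eq_iff, hx, eq_comm]

/-- Let `a_j := i·e_j ∈ ℂ^{n+1}` for `1 ≤ j ≤ N ≤ n+1`, `r_j := 1`, and
`S_j := {z | (z − a_j)² = 1}` (sum-of-squares).  The spheres `S₁,…,S_N` are in general
position: for every nonempty `I ⊆ {1,…,N}` there is no point `z ∈ ⋂_{j∈I} S_j` at which the
gradients `{z − a_j}_{j∈I}` are linearly dependent over `ℂ`. -/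
theorem stmt_9 (n N : ℕ) (hN : N ≤ n + 1) :
    let a : Fin N → Fin (n + 1) → ℂ := fun i j => if (j : ℕ) = (i : ℕ) then Complex.I else 0
    let S : Fin N → Set (Fin (n + 1) → ℂ) := fun i => {z | ∑ j, (z j - a i j) ^ 2 = 1}
    ∀ I : Finset (Fin N), I.Nonempty → ∀ z ∈ ⋂ i ∈ I, S i,
      LinearIndependent ℂ (fun i : I => fun j => z j - a i.1 j) := by
  intro a S I _ z hz
  have ha : a = fun i => Pi.single (Fin.castLE hN i) Complex.I := by
    ext i j
    simp [a, Pi.single_apply, Fin.ext_iff]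
  have hneg : NegOrthonormal fun i : I => a i := by
    rw [ha]
    exact negOrthonormal_single Complex.I_mul_I
      ((Fin.castLE_injective hN).comp Subtype.val_injective)
  refine hneg.linearIndependent.const_sub fun c hc hzc => ?_
  refine hneg.not_forall_sub_dotProduct_self_eq_one c hc fun k => ?_
  rw [hzc]
  simpa [dotProduct, sq, S] using Set.mem_iInter₂.mp hz k k.2
end

section
/- With a_j = i·e_j, r_j = 1 and nonempty I ⊆ {1,…,n+1}: a point z lies in ⋂_{j∈I} S_j if and only if z_{j₁} = z_{j₂} for all j₁,j₂ ∈ I and |I|·(z_{j₀} − i/|I|)² + ∑_{j∉I} z_j² = 2 − 1/|I| for any (all) j₀ ∈ I. Consequently the 'center' of ⋂_{j∈I} S_j is the point c_I with (c_I)_j = i/|I| for j ∈ I and 0 otherwise. -/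
lemma aux10 (n : ℕ) (z : Fin (n + 1) → ℂ) (i : Fin (n + 1)) :
    ∑ j, (z j - if j = i then Complex.I else 0) ^ 2
      = (∑ j, z j ^ 2) - 2 * Complex.I * z i - 1 := by
  have h : ∀ j, (z j - if j = i then Complex.I else 0) ^ 2
      = z j ^ 2 + (if j = i then (-2 * Complex.I * z i - 1) else 0) := by
    intro j
    split
    · next h => subst h; linear_combination Complex.I_sq
    · ring
  simp_rw [h, Finset.sum_add_distrib, Finset.sum_ite_eq' Finset.univ i,
    Finset.mem_univ, if_true]
  ring

lemma key10 (c w : ℂ) (hc : c ≠ 0) :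
    c * (w - Complex.I / c) ^ 2 = c * w ^ 2 - 2 * Complex.I * w - 1 / c := by
  field_simp
  linear_combination Complex.I_sq

/-- With `a_j = i·e_j` (`1 ≤ j ≤ n+1`), `r_j = 1`,
`S_j = {z ∈ ℂ^{n+1} | (z − a_j)² = 1}`, and nonempty `I ⊆ {1,…,n+1}`: a point `z` lies in
`⋂_{j∈I} S_j` if and only if `z_{j₁} = z_{j₂}` for all `j₁,j₂ ∈ I` and
`|I|·(z_{j₀} − i/|I|)² + ∑_{j∉I} z_j² = 2 − 1/|I|` for any (equivalently, all) `j₀ ∈ I`. -/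
theorem stmt_10 (n : ℕ) (I : Finset (Fin (n + 1))) (hI : I.Nonempty) (z : Fin (n + 1) → ℂ) :
    let a : Fin (n + 1) → Fin (n + 1) → ℂ := fun i j => if j = i then Complex.I else 0
    let S : Fin (n + 1) → Set (Fin (n + 1) → ℂ) := fun i => {z | ∑ j, (z j - a i j) ^ 2 = 1}
    (z ∈ ⋂ j ∈ I, S j) ↔
      ((∀ j₁ ∈ I, ∀ j₂ ∈ I, z j₁ = z j₂) ∧
        ∀ j₀ ∈ I, (I.card : ℂ) * (z j₀ - Complex.I / (I.card : ℂ)) ^ 2 + ∑ j ∈ Iᶜ, z j ^ 2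
          = 2 - 1 / (I.card : ℂ)) := by
  intro a S
  have hc : (I.card : ℂ) ≠ 0 := by
    exact_mod_cast Nat.cast_ne_zero.mpr (Finset.card_ne_zero_of_mem hI.choose_spec)
  have hmem : (z ∈ ⋂ j ∈ I, S j) ↔
      ∀ i ∈ I, (∑ j, z j ^ 2) - 2 * Complex.I * z i - 1 = 1 := by
    simp only [Set.mem_iInter, S, a, Set.mem_setOf_eq, aux10]
  rw [hmem]
  have hsplit : (∑ j, z j ^ 2) = (∑ j ∈ I, z j ^ 2) + ∑ j ∈ Iᶜ, z j ^ 2 :=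
    (Finset.sum_add_sum_compl I _).symm
  constructor
  · intro h
    have heq : ∀ j₁ ∈ I, ∀ j₂ ∈ I, z j₁ = z j₂ := by
      intro j₁ h₁ j₂ h₂
      have e1 := h j₁ h₁
      have e2 := h j₂ h₂
      linear_combination (Complex.I / 2) * (e1 - e2) + (z j₁ - z j₂) * Complex.I_sq
    refine ⟨heq, fun j₀ hj₀ => ?_⟩
    have hsum : (∑ j ∈ I, z j ^ 2) = (I.card : ℂ) * z j₀ ^ 2 := by
      rw [Finset.sum_congr rfl (fun j hj => by rw [heq j hj j₀ hj₀]), Finset.sum_const,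
        nsmul_eq_mul]
    have e := h j₀ hj₀
    rw [hsplit, hsum] at e
    rw [key10 _ _ hc]
    linear_combination e
  · rintro ⟨heq, h⟩ i hi
    have hsum : (∑ j ∈ I, z j ^ 2) = (I.card : ℂ) * z i ^ 2 := by
      rw [Finset.sum_congr rfl (fun j hj => by rw [heq j hj i hi]), Finset.sum_const,
        nsmul_eq_mul]
    have e := h i hi
    rw [key10 _ _ hc] at e
    rw [hsplit, hsum]
    linear_combination e
end

section
/- With a_j = i·e_j, r_j = 1 and nonempty I ⊆ {1,…,n+1}, the intersection ⋂_{j∈I} S_j deformation retracts onto the real sphere S_ℝ(I) := {z ∈ S_{j₀} | Im z_j = 1/|I| for j ∈ I, Im z_j = 0 for j ∉ I, and Re z_{j₁} = Re z_{j₂} for all j₁,j₂ ∈ I}, where j₀ := min I. Equivalently S_ℝ(I) = S_{j₀} ∩ (c_I + V_I), where V_I := {x ∈ ℝ^{n+1} | x_{j₁} = x_{j₂} for all j₁,j₂ ∈ I} and (c_I)_j = i/|I| for j ∈ I, 0 otherwise. -/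
set_option maxHeartbeats 1000000

noncomputable def sFac (r2 Y t : ℝ) : ℝ := Real.sqrt ((r2 + (1-t)^2 * Y) / (r2 + Y))

noncomputable def retr (N : ℕ) (c : Fin N → ℂ) (r2 : ℝ) (z : Fin N → ℂ) (t : ℝ) :
    Fin N → ℂ :=
  fun j => c j + (((sFac r2 (∑ k, ((z k - c k).im)^2) t * (z j - c j).re : ℝ) : ℂ) +
    (((1 - t) * (z j - c j).im : ℝ) : ℂ) * Complex.I)

lemma mk_sq_re (a b : ℝ) : (((a:ℂ) + (b:ℂ)*Complex.I)^2).re = a^2 - b^2 := by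
  rw [sq, Complex.mul_re]; simp; ring

lemma mk_sq_im (a b : ℝ) : (((a:ℂ) + (b:ℂ)*Complex.I)^2).im = 2*a*b := by
  rw [sq, Complex.mul_im]; simp; ring

lemma sum_sq_expand (N : ℕ) (z c : Fin N → ℂ) :
    ∑ j, (z j - c j)^2 = ∑ j, (z j)^2 - 2 * ∑ j, c j * z j + ∑ j, (c j)^2 := by
  rw [Finset.mul_sum, ← Finset.sum_sub_distrib, ← Finset.sum_add_distrib]
  exact Finset.sum_congr rfl fun j _ => by ring

section retrfacts
variable {N : ℕ} {c : Fin N → ℂ} {r2 : ℝ} (hr2 : 0 < r2)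

lemma Ynonneg (z : Fin N → ℂ) : 0 ≤ ∑ k, ((z k - c k).im)^2 :=
  Finset.sum_nonneg fun k _ => sq_nonneg _

include hr2 in
lemma sFac_sq (z : Fin N → ℂ) (t : ℝ) :
    (sFac r2 (∑ k, ((z k - c k).im)^2) t)^2
      = (r2 + (1-t)^2 * (∑ k, ((z k - c k).im)^2)) / (r2 + ∑ k, ((z k - c k).im)^2) := by
  have hY := Ynonneg (c := c) z
  exact Real.sq_sqrt (div_nonneg (by positivity) (by positivity))

include hr2 in
lemma retr_mem (z : Fin N → ℂ) (t : ℝ) (hz : ∑ j, (z j - c j)^2 = (r2 : ℂ)) :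
    ∑ j, (retr N c r2 z t j - c j)^2 = (r2 : ℂ) := by
  have hY : (0:ℝ) ≤ ∑ k, ((z k - c k).im)^2 := Ynonneg z
  set Y := ∑ k, ((z k - c k).im)^2 with hYdef
  set s := sFac r2 Y t with hs
  have hs2 : s^2 = (r2 + (1-t)^2 * Y) / (r2 + Y) := sFac_sq hr2 z t
  have hre : ∑ j, (((z j - c j).re)^2 - ((z j - c j).im)^2) = r2 := by
    have h1 : ∀ j : Fin N, ((z j - c j)^2).re = ((z j - c j).re)^2 - ((z j - c j).im)^2 :=
      fun j => by rw [sq, Complex.mul_re]; ring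
    have h := congrArg Complex.re hz
    rwa [Complex.re_sum, Complex.ofReal_re, Finset.sum_congr rfl (fun j _ => h1 j)] at h
  have him : ∑ j, ((z j - c j).re * (z j - c j).im) = 0 := by
    have h1 : ∀ j : Fin N, ((z j - c j)^2).im = 2 * ((z j - c j).re * (z j - c j).im) :=
      fun j => by rw [sq, Complex.mul_im]; ring
    have h := congrArg Complex.im hz
    rw [Complex.im_sum, Complex.ofReal_im, Finset.sum_congr rfl (fun j _ => h1 j),
      ← Finset.mul_sum] at h
    linarith
  have hre' : (∑ j, ((z j - c j).re)^2) - (∑ j, ((z j - c j).im)^2) = r2 := by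
    rw [← Finset.sum_sub_distrib]; exact hre
  have hX : ∑ j, ((z j - c j).re)^2 = r2 + Y := by rw [hYdef]; linarith
  have hterm : ∀ j, retr N c r2 z t j - c j
      = ((s * (z j - c j).re : ℝ) : ℂ) + (((1-t) * (z j - c j).im : ℝ) : ℂ) * Complex.I := by
    intro j; simp only [retr, add_sub_cancel_left, hs, hYdef]
  apply Complex.ext
  · rw [Complex.re_sum, Complex.ofReal_re,
      Finset.sum_congr rfl (fun j _ => by rw [hterm j, mk_sq_re])]
    have h2 : ∑ j, ((s * (z j - c j).re)^2 - ((1-t) * (z j - c j).im)^2)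
        = s^2 * (∑ j, ((z j - c j).re)^2) - (1-t)^2 * Y := by
      rw [hYdef, Finset.mul_sum, Finset.mul_sum, ← Finset.sum_sub_distrib]
      exact Finset.sum_congr rfl fun j _ => by ring
    rw [h2, hX, hs2]
    field_simp
    ring
  · rw [Complex.im_sum, Complex.ofReal_im,
      Finset.sum_congr rfl (fun j _ => by rw [hterm j, mk_sq_im])]
    have h2 : ∑ j, (2 * (s * (z j - c j).re) * ((1-t) * (z j - c j).im))
        = 2 * s * (1-t) * ∑ j, ((z j - c j).re * (z j - c j).im) := by
      rw [Finset.mul_sum]; exact Finset.sum_congr rfl fun j _ => by ring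
    rw [h2, him, mul_zero]

include hr2 in
lemma retr_zero (z : Fin N → ℂ) : retr N c r2 z 0 = z := by
  funext j
  have hY := Ynonneg (c := c) z
  have : sFac r2 (∑ k, ((z k - c k).im)^2) 0 = 1 := by
    unfold sFac
    rw [show ((r2 + (1-(0:ℝ))^2 * (∑ k, ((z k - c k).im)^2)) / (r2 + ∑ k, ((z k - c k).im)^2)) = 1
      from by rw [div_eq_one_iff_eq (by positivity)]; ring, Real.sqrt_one]
  simp only [retr, this, one_mul, sub_zero, one_mul, Complex.re_add_im, add_sub_cancel]

include hr2 in
lemma retr_fixed (z : Fin N → ℂ) (t : ℝ) (hzy : ∀ j, (z j - c j).im = 0) :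
    retr N c r2 z t = z := by
  funext j
  have hYz : ∑ k, ((z k - c k).im)^2 = 0 := by simp [hzy]
  have : sFac r2 (∑ k, ((z k - c k).im)^2) t = 1 := by
    rw [hYz]; unfold sFac
    rw [show ((r2 + (1-t)^2 * (0:ℝ)) / (r2 + 0)) = 1 from by
      rw [div_eq_one_iff_eq (by positivity)]; ring, Real.sqrt_one]
  simp only [retr, this, one_mul, hzy j, mul_zero, Complex.ofReal_zero, zero_mul, add_zero]
  rw [show ((((z j - c j).re : ℝ)) : ℂ) = z j - c j from by
    conv_rhs => rw [← Complex.re_add_im (z j - c j)]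
    rw [hzy j]; simp]
  ring

include hr2 in
lemma retr_cont : Continuous (fun p : (Fin N → ℂ) × ℝ => retr N c r2 p.1 p.2) := by
  have hYc : Continuous (fun p : (Fin N → ℂ) × ℝ => ∑ k, ((p.1 k - c k).im)^2 ) := by fun_prop
  have hsc : Continuous (fun p : (Fin N → ℂ) × ℝ =>
      sFac r2 (∑ k, ((p.1 k - c k).im)^2) p.2) := by
    apply Real.continuous_sqrt.comp
    apply Continuous.div (by fun_prop) (by fun_prop)
    intro p
    have := Ynonneg (c := c) p.1
    positivity
  apply continuous_pi
  intro j
  unfold retr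
  fun_prop
end retrfacts

lemma Idiv_re (k : ℕ) : (Complex.I / (k:ℂ)).re = 0 := by
  rw [div_eq_mul_inv, ← Complex.ofReal_natCast, ← Complex.ofReal_inv]
  simp [Complex.mul_re]

lemma Idiv_im (k : ℕ) : (Complex.I / (k:ℂ)).im = 1/(k:ℝ) := by
  rw [div_eq_mul_inv, ← Complex.ofReal_natCast, ← Complex.ofReal_inv]
  simp [Complex.mul_im, one_div]

/-- With `a_j = i·e_j`, `r_j = 1`, `S_j = {z | (z − a_j)² = 1}` and nonempty
`I ⊆ {1,…,n+1}`, the intersection `⋂_{j∈I} S_j` (strongly) deformation retracts onto the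
real sphere
`S_ℝ(I) = {z ∈ S_{j₀} | Im z_j = 1/|I| (j ∈ I), Im z_j = 0 (j ∉ I), Re z_{j₁} = Re z_{j₂} (j₁,j₂ ∈ I)}`
where `j₀ = min I`; equivalently `S_ℝ(I) = S_{j₀} ∩ (c_I + V_I)` with
`V_I = {x ∈ ℝ^{n+1} | x_{j₁} = x_{j₂} ∀ j₁,j₂ ∈ I}` and `(c_I)_j = i/|I|` for `j ∈ I`,
`0` otherwise. -/
theorem stmt_11 (n : ℕ) (I : Finset (Fin (n + 1))) (hI : I.Nonempty) :
    let a : Fin (n + 1) → Fin (n + 1) → ℂ := fun i j => if j = i then Complex.I else 0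
    let S : Fin (n + 1) → Set (Fin (n + 1) → ℂ) := fun i => {z | ∑ j, (z j - a i j) ^ 2 = 1}
    let T : Set (Fin (n + 1) → ℂ) := ⋂ j ∈ I, S j
    let j₀ : Fin (n + 1) := I.min' hI
    let cI : Fin (n + 1) → ℂ := fun j => if j ∈ I then Complex.I / (I.card : ℂ) else 0
    let SR : Set (Fin (n + 1) → ℂ) :=
      {z | z ∈ S j₀ ∧ (∀ j ∈ I, (z j).im = 1 / (I.card : ℝ)) ∧ (∀ j ∉ I, (z j).im = 0) ∧
        ∀ j₁ ∈ I, ∀ j₂ ∈ I, (z j₁).re = (z j₂).re}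
    -- the equivalent description `S_ℝ(I) = S_{j₀} ∩ (c_I + V_I)`
    (SR = {z | z ∈ S j₀ ∧ ∃ x : Fin (n + 1) → ℝ,
        (∀ j₁ ∈ I, ∀ j₂ ∈ I, x j₁ = x j₂) ∧ z = fun j => cI j + (x j : ℂ)}) ∧
    -- the strong deformation retraction of `⋂_{j∈I} S_j` onto `S_ℝ(I)`
    ∃ g : (Fin (n + 1) → ℂ) → ℝ → (Fin (n + 1) → ℂ),
      (∀ z ∈ T, ∀ t ∈ Set.Icc (0 : ℝ) 1, g z t ∈ T) ∧
      Continuous (fun p : T × Set.Icc (0 : ℝ) 1 => g p.1 p.2) ∧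
      (∀ z ∈ T, g z 0 = z) ∧
      (∀ z ∈ T, g z 1 ∈ SR) ∧
      (∀ z ∈ SR, ∀ t ∈ Set.Icc (0 : ℝ) 1, g z t = z) := by
  intro a S T j₀ cI SR
  have hm : 0 < I.card := Finset.card_pos.mpr hI
  have hmR : (0:ℝ) < (I.card : ℝ) := by exact_mod_cast hm
  have hmC : (I.card : ℂ) ≠ 0 := by exact_mod_cast Nat.cast_ne_zero.mpr hm.ne'
  have hj₀ : j₀ ∈ I := I.min'_mem hI
  -- re/im of cI
  have hcre : ∀ j, (cI j).re = 0 := by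
    intro j; simp only [cI]; split
    · exact Idiv_re _
    · rfl
  have hcim : ∀ j, (cI j).im = if j ∈ I then 1/(I.card:ℝ) else 0 := by
    intro j; simp only [cI]; split
    · exact Idiv_im _
    · rfl
  have hcval : ∀ j ∈ I, cI j = Complex.I / (I.card : ℂ) := fun j hj => if_pos hj
  -- characterization of S i
  have hS : ∀ (i : Fin (n+1)) (z : Fin (n+1) → ℂ),
      z ∈ S i ↔ ∑ k, (z k)^2 - 2*Complex.I*(z i) = 2 := by
    intro i z
    have ha1 : ∑ k, a i k * z k = Complex.I * z i := by simp [a, ite_mul]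
    have ha2 : ∑ k, (a i k)^2 = -1 := by simp [a, apply_ite (· ^ 2)]
    simp only [S, Set.mem_setOf_eq]
    rw [sum_sq_expand, ha1, ha2]
    constructor <;> intro h <;> linear_combination h
  -- helper sums for cI
  have hr2pos : (0:ℝ) < 2 - 1/(I.card:ℝ) := by
    have h1 : (1:ℝ) ≤ (I.card:ℝ) := by exact_mod_cast hm
    have : 1/(I.card:ℝ) ≤ 1 := by
      rw [div_le_one hmR]; exact h1
    linarith
  have hcast : ((2 - 1/(I.card:ℝ) : ℝ) : ℂ) = 2 - 1/(I.card:ℂ) := by push_cast; ring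
  have hcz : ∀ z : Fin (n+1) → ℂ, (∀ j ∈ I, z j = z j₀) →
      ∑ k, cI k * z k = Complex.I * z j₀ := by
    intro z heq
    simp only [cI, ite_mul, zero_mul]
    rw [Finset.sum_ite_mem, Finset.univ_inter,
      Finset.sum_congr rfl (fun j hj => by rw [heq j hj]), Finset.sum_const, nsmul_eq_mul]
    field_simp
  have hc2 : ∑ k, (cI k)^2 = -(1/(I.card:ℂ)) := by
    simp only [cI, apply_ite (· ^ 2)]
    rw [zero_pow two_ne_zero, Finset.sum_ite_mem, Finset.univ_inter, Finset.sum_const,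
      nsmul_eq_mul, div_pow, Complex.I_sq]
    field_simp
  -- characterization of T
  have hTiff : ∀ z : Fin (n+1) → ℂ, z ∈ T ↔
      ((∀ j ∈ I, z j = z j₀) ∧ ∑ k, (z k - cI k)^2 = ((2 - 1/(I.card:ℝ) : ℝ) : ℂ)) := by
    intro z
    have hTmem : z ∈ T ↔ ∀ j ∈ I, ∑ k, (z k)^2 - 2*Complex.I*(z j) = 2 := by
      simp only [T, Set.mem_iInter]
      exact ⟨fun h j hj => (hS j z).mp (h j hj), fun h j hj => (hS j z).mpr (h j hj)⟩
    rw [hTmem]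
    constructor
    · intro h
      have heq : ∀ j ∈ I, z j = z j₀ := by
        intro j hj
        have h1 := h j hj
        have h2 := h j₀ hj₀
        have h3 : (2*Complex.I) * z j = (2*Complex.I) * z j₀ := by linear_combination h2 - h1
        exact mul_left_cancel₀ (mul_ne_zero two_ne_zero Complex.I_ne_zero) h3
      refine ⟨heq, ?_⟩
      rw [sum_sq_expand, hcz z heq, hc2, hcast]
      linear_combination h j₀ hj₀
    · rintro ⟨heq, hq⟩
      intro j hj
      rw [sum_sq_expand, hcz z heq, hc2, hcast] at hq
      rw [heq j hj]
      linear_combination hq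
  constructor
  · -- set equality
    ext z
    simp only [SR, Set.mem_setOf_eq]
    constructor
    · rintro ⟨hz0, h1, h2, h3⟩
      refine ⟨hz0, fun j => (z j).re, h3, ?_⟩
      funext j
      apply Complex.ext
      · rw [Complex.add_re, hcre, Complex.ofReal_re, zero_add]
      · rw [Complex.add_im, Complex.ofReal_im, add_zero, hcim]
        by_cases hj : j ∈ I
        · rw [if_pos hj, h1 j hj]
        · rw [if_neg hj, h2 j hj]
    · rintro ⟨hz0, x, hx, hzx⟩
      subst hzx
      refine ⟨hz0, ?_, ?_, ?_⟩
      · intro j hj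
        rw [Complex.add_im, Complex.ofReal_im, add_zero, hcim, if_pos hj]
      · intro j hj
        rw [Complex.add_im, Complex.ofReal_im, add_zero, hcim, if_neg hj]
      · intro j₁ h₁ j₂ h₂
        rw [Complex.add_re, Complex.add_re, hcre, hcre, Complex.ofReal_re, Complex.ofReal_re,
          zero_add, zero_add]
        exact hx j₁ h₁ j₂ h₂
  · -- the retraction
    refine ⟨retr (n+1) cI (2 - 1/(I.card:ℝ)), ?_, ?_, ?_, ?_, ?_⟩
    · -- stays in T
      intro z hz t _
      obtain ⟨heq, hq⟩ := (hTiff z).mp hz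
      rw [hTiff]
      constructor
      · intro j hj
        simp only [retr]
        rw [heq j hj, hcval j hj, hcval j₀ hj₀]
      · exact retr_mem hr2pos z t hq
    · -- continuity
      show Continuous ((fun q : (Fin (n+1) → ℂ) × ℝ => retr (n+1) cI (2 - 1/(I.card:ℝ)) q.1 q.2)
        ∘ (fun p : T × Set.Icc (0:ℝ) 1 => ((p.1 : Fin (n+1) → ℂ), (p.2 : ℝ))))
      exact (retr_cont hr2pos).comp
        ((continuous_subtype_val.comp continuous_fst).prodMk
          (continuous_subtype_val.comp continuous_snd))
    · -- at time 0
      intro z _; exact retr_zero hr2pos z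
    · -- at time 1
      intro z hz
      have hmem : retr (n+1) cI (2 - 1/(I.card:ℝ)) z 1 ∈ T := by
        obtain ⟨heq, hq⟩ := (hTiff z).mp hz
        rw [hTiff]
        refine ⟨?_, retr_mem hr2pos z 1 hq⟩
        intro j hj
        simp only [retr]
        rw [heq j hj, hcval j hj, hcval j₀ hj₀]
      obtain ⟨heq', _⟩ := (hTiff _).mp hmem
      have him : ∀ j, (retr (n+1) cI (2 - 1/(I.card:ℝ)) z 1 j).im = (cI j).im := by
        intro j
        simp only [retr, Complex.add_im, Complex.ofReal_im, Complex.mul_im, Complex.I_im,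
          Complex.I_re, Complex.ofReal_re, mul_zero, zero_add, mul_one, sub_self, zero_mul]
        ring
      refine ⟨?_, ?_, ?_, ?_⟩
      · -- ∈ S j₀
        have : retr (n+1) cI (2 - 1/(I.card:ℝ)) z 1 ∈ ⋂ j ∈ I, S j := hmem
        rw [Set.mem_iInter₂] at this
        exact this j₀ hj₀
      · intro j hj; rw [him j, hcim, if_pos hj]
      · intro j hj; rw [him j, hcim, if_neg hj]
      · intro j₁ h₁ j₂ h₂
        rw [heq' j₁ h₁, heq' j₂ h₂]
    · -- fixed on SR
      intro z hz t _
      obtain ⟨_, h1, h2, _⟩ := hz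
      apply retr_fixed hr2pos
      intro j
      rw [Complex.sub_im, hcim]
      by_cases hj : j ∈ I
      · rw [if_pos hj, h1 j hj, sub_self]
      · rw [if_neg hj, h2 j hj, sub_self]
end

section
/- For a j ∈ {1,…,n+1} and the generator 𝐞_{{j}} = (−1)^{j−1}·e_{{j},{j},≤} of the summand of H_{n+1}(ℂ^{n+1}, ⋃_i S_i) corresponding to S_j (in the standard symmetric arrangement a_j = i·e_j, r_j = 1), the intersection index with (i·ℝ)^{n+1} equals 1: ⟨(i·ℝ)^{n+1} | 𝐞_{{j}}⟩ = 1. The representative 𝐞_{{j}} has support in a_j + ℝ^{n+1} and meets (i·ℝ)^{n+1} only in the single point a_j, where the orientations match after accounting for the sign (−1)^{j−1} coming from the change of basis v₁,…,v̂_j,…,v_{n+1}, v. -/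
/-!
At a point of `(i·ℝ)^{n+1}` all real parts vanish, and on the cell all imaginary parts are
prescribed, so the two meet only in `a_j`. For the orientation, subtracting the last column
`v = (1,…,1)` from the columns `v_l = v - e_l` leaves `-e_{l}` for `l ≠ j` next to `v`; the row `j`
of the result is then a unit vector, and expanding along it gives `det = (-1)^j`, which cancels
the sign of `𝐞_{{j}}`.
-/

open Matrix

namespace Matrix

variable {R : Type*} [CommRing R] {n : ℕ}

theorem det_succ_column_of_forall_ne_eq_zero (A : Matrix (Fin (n + 1)) (Fin (n + 1)) R)
    {i j : Fin (n + 1)} (h : ∀ k ≠ i, A k j = 0) :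
    A.det = (-1) ^ (i + j : ℕ) * A i j * (A.submatrix i.succAbove j.succAbove).det := by
  rw [det_succ_column A j,
    Finset.sum_eq_single i (fun k _ hk => by rw [h k hk, mul_zero, zero_mul]) (by simp)]

theorem det_of_snoc_compl_single (j : Fin (n + 1)) :
    (of fun i c => (Fin.snoc (α := fun _ => Fin (n + 1) → R)
      (fun c k => if k = j.succAbove c then 0 else 1) (fun _ => 1) c) i).det =
      (-1) ^ (j : ℕ) := by
  set B : Matrix (Fin (n + 1)) (Fin (n + 1)) R :=
    Fin.snoc (α := fun _ => Fin (n + 1) → R) (fun c => -Pi.single (j.succAbove c) 1) (fun _ => 1)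
  have hB_castSucc (c : Fin n) (k : Fin (n + 1)) :
      B c.castSucc k = -if k = j.succAbove c then 1 else 0 := by
    simp [B, Pi.single_apply]
  have hB_last (k : Fin (n + 1)) : B (Fin.last n) k = 1 := by simp [B]
  have h_minor : B.submatrix (Fin.last n).succAbove j.succAbove = -1 := by
    ext r c
    simp [hB_castSucc, one_apply, eq_comm]
  rw [← det_transpose, det_eq_of_forall_row_eq_smul_add_const (B := B)
      (fun c => if c = Fin.last n then 0 else 1) (Fin.last n) (by simp) ?rows,
    det_succ_column_of_forall_ne_eq_zero B (i := Fin.last n) (j := j) ?col, h_minor, hB_last,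
    det_neg, det_one, Fintype.card_fin, mul_one, mul_one, pow_add, mul_right_comm, ← pow_add,
    Fin.val_last, Even.neg_one_pow ⟨n, rfl⟩, one_mul]
  case rows =>
    intro c k
    induction c using Fin.lastCases with
    | last => simp [hB_last]
    | cast c =>
      simp only [transpose_apply, of_apply, Fin.snoc_castSucc, hB_castSucc, hB_last,
        (Fin.castSucc_lt_last c).ne, ↓reduceIte, mul_one]
      split_ifs <;> ring
  case col =>
    intro k hk
    obtain ⟨c, rfl⟩ := Fin.exists_castSucc_eq.2 hk
    simp [hB_castSucc, (Fin.succAbove_ne j c).symm]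

end Matrix

theorem cell_inter_imaginary {ι : Type*} [Fintype ι] [DecidableEq ι] (j : ι) :
    {z : ι → ℂ | (∀ k, (z k).im = if k = j then 1 else 0) ∧ ∑ k, (z k).re ^ 2 ≤ 1} ∩
      {z | ∀ k, (z k).re = 0} = {fun k => if k = j then Complex.I else 0} := by
  ext z
  simp only [Set.mem_inter_iff, Set.mem_ofPred_eq, Set.mem_singleton_iff]
  constructor
  · rintro ⟨⟨him, -⟩, hre⟩
    funext k
    apply Complex.ext <;> split_ifs <;> simp_all
  · rintro rfl
    refine ⟨⟨fun k => ?_, ?_⟩, fun k => ?_⟩ <;> simp [apply_ite]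

/-- In the standard symmetric arrangement (`a_j = i·e_j`, `r_j = 1`), the
generator `𝐞_{{j}} = (−1)^{j−1}·e_{{j},{j},≤}` of the summand of
`H_{n+1}(ℂ^{n+1}, ⋃_i S_i)` corresponding to `S_j` has intersection index
`⟨(i·ℝ)^{n+1} | 𝐞_{{j}}⟩ = 1` with `(i·ℝ)^{n+1}`.  Formally: the supporting cell
`{z | Im z = e_j, (z − i·e_j)² ≤ 1}` meets `(i·ℝ)^{n+1}` exactly in the single point
`a_j = i·e_j`, and at that point the orientations match: the sign `(−1)^{(j:ℕ)}` (0-based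
version of `(−1)^{j−1}`) times the determinant of the change-of-basis matrix from the
combined tangent basis (the cell's basis `v₁,…,v̂_j,…,v_{n+1},v` of real vectors followed by
the imaginary basis `i·e₁,…,i·e_{n+1}` of `(i·ℝ)^{n+1}`) to the standard oriented basis of
`ℂ^{n+1} ≅ ℝ^{2n+2}` equals `1`, so the index (the orientation sign at the unique
transversal intersection point) is `1`. -/
theorem stmt_18 (n : ℕ) (j : Fin (n + 1)) :
    let aj : Fin (n + 1) → ℂ := fun k => if k = j then Complex.I else 0
    -- the cell `e_{{j},{j},≤}`, i.e. `{z | Im z = e_j, (z − a_j)² ≤ 1}`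
    let cell : Set (Fin (n + 1) → ℂ) :=
      {z | (∀ k, (z k).im = if k = j then 1 else 0) ∧ ∑ k, (z k).re ^ 2 ≤ 1}
    let iR : Set (Fin (n + 1) → ℂ) := {z | ∀ k, (z k).re = 0}
    let vj : Fin (n + 1) → Fin (n + 1) → ℝ := fun l k => if k = l then 0 else 1
    let cols : Fin (n + 1) → Fin (n + 1) → ℝ :=
      Fin.snoc (fun c => vj (j.succAbove c)) (fun _ => 1)
    let M : Matrix (Fin (n + 1)) (Fin (n + 1)) ℝ := Matrix.of fun i c => cols c i
    -- combined tangent bases at `a_j` in real coordinates (real parts ⊕ imaginary parts)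
    let B : Matrix (Fin (n + 1) ⊕ Fin (n + 1)) (Fin (n + 1) ⊕ Fin (n + 1)) ℝ :=
      Matrix.fromBlocks M 0 0 1
    cell ∩ iR = {aj} ∧ (-1 : ℝ) ^ (j : ℕ) * Matrix.det B = 1 := by
  intro aj cell iR vj cols M B
  refine ⟨cell_inter_imaginary j, ?_⟩
  rw [det_fromBlocks_zero₂₁, det_one, mul_one, det_of_snoc_compl_single, ← pow_add,
    Even.neg_one_pow ⟨_, rfl⟩]
end
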